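/- Let n be a positive integer, let α > 0, let p_1, …, p_n ∈ [0,1], and let q_1, …, q_n ≥ 0 be real numbers with q_i ≤ α · p_i for every i. Suppose Q := ∑_{i=1}^{n} q_i > 0, and set δ := (1 − exp(−Q/α)) / Q. Then for every nonempty subset S ⊆ {1, …, n}, 1 − ∏_{i∈S} (1 − p_i) ≥ δ · ∑_{i∈S} q_i. -/

import Mathlib

/-! The map `x ↦ 1 - exp (-x)` is concave and vanishes at `0`, so
`t (1 - exp (-x)) ≤ 1 - exp (-t x)` for `t ∈ [0, 1]`. Taking `x = Q / α` and `t = q(S) / Q` gives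
`δ q(S) ≤ 1 - exp (-q(S) / α)`, and `q i ≤ α p i` together with `1 - p ≤ exp (-p)` bounds this
by `1 - ∏_{i ∈ S} (1 - p i)`. -/

open Finset Real

lemma ConcaveOn.mul_le_map_mul_of_map_zero {f : ℝ → ℝ} (hf : ConcaveOn ℝ (Set.Ici 0) f)
    (h0 : f 0 = 0) {t x : ℝ} (ht₀ : 0 ≤ t) (ht₁ : t ≤ 1) (hx : 0 ≤ x) :
    t * f x ≤ f (t * x) := by
  have := hf.2 (Set.mem_Ici.2 hx) Set.self_mem_Ici ht₀ (sub_nonneg.2 ht₁) (by ring)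
  simpa [h0] using this

lemma concaveOn_one_sub_exp_neg : ConcaveOn ℝ Set.univ (fun x : ℝ => 1 - exp (-x)) := by
  have hconv : ConvexOn ℝ Set.univ (fun x : ℝ => exp (-x)) := by
    simpa [Function.comp_def] using convexOn_exp.comp_affineMap (-AffineMap.id ℝ ℝ)
  exact (concaveOn_const 1 convex_univ).sub hconv

lemma prod_one_sub_le_exp_neg_sum {ι : Type*} (s : Finset ι) {p : ι → ℝ}
    (hp : ∀ i ∈ s, p i ≤ 1) : ∏ i ∈ s, (1 - p i) ≤ exp (-∑ i ∈ s, p i) := by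
  rw [← sum_neg_distrib, exp_sum]
  exact prod_le_prod (fun i hi => sub_nonneg.2 (hp i hi)) fun i _ => one_sub_le_exp_neg (p i)

theorem stmt_7_general (n : ℕ) (α : ℝ) (hα : 0 < α) (p q : Fin n → ℝ)
    (hp : ∀ i, p i ∈ Set.Icc (0 : ℝ) 1) (hq : ∀ i, 0 ≤ q i)
    (hqp : ∀ i, q i ≤ α * p i) (hQ : 0 < ∑ i, q i) :
    ∀ S : Finset (Fin n), S.Nonempty →
      (1 - Real.exp (-(∑ j, q j) / α)) / (∑ j, q j) * ∑ i ∈ S, q i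
        ≤ 1 - ∏ i ∈ S, (1 - p i) := by
  intro S _
  set Q := ∑ j, q j
  set qS := ∑ i ∈ S, q i
  have hqS : 0 ≤ qS := sum_nonneg fun i _ => hq i
  have hqSQ : qS ≤ Q := sum_le_sum_of_subset_of_nonneg (subset_univ S) fun i _ _ => hq i
  have hqp_sum : qS / α ≤ ∑ i ∈ S, p i := by
    rw [div_le_iff₀ hα, sum_mul]
    exact sum_le_sum fun i _ => (hqp i).trans_eq (mul_comm _ _)
  calc (1 - exp (-Q / α)) / Q * qS
      = qS / Q * (1 - exp (-(Q / α))) := by rw [neg_div]; ring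
    _ ≤ 1 - exp (-(qS / Q * (Q / α))) :=
        (concaveOn_one_sub_exp_neg.subset (Set.subset_univ _) (convex_Ici 0))
          |>.mul_le_map_mul_of_map_zero (by simp) (div_nonneg hqS hQ.le)
            ((div_le_one hQ).2 hqSQ) (div_nonneg hQ.le hα.le)
    _ = 1 - exp (-(qS / α)) := by field_simp
    _ ≤ 1 - exp (-∑ i ∈ S, p i) := by gcongr
    _ ≤ 1 - ∏ i ∈ S, (1 - p i) := by
        gcongr; exact prod_one_sub_le_exp_neg_sum S fun i _ => (hp i).2

/-- Feasibility of the scaled targets in the proof of Corollary 1: for every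
nonempty subset `S`, `1 - ∏_{i∈S} (1 - p i) ≥ δ · ∑_{i∈S} q i`, where
`δ = (1 - exp (-(∑ q)/α)) / (∑ q)`. -/
theorem stmt_7 (n : ℕ) (hn : 0 < n) (α : ℝ) (hα : 0 < α) (p q : Fin n → ℝ)
    (hp : ∀ i, p i ∈ Set.Icc (0 : ℝ) 1) (hq : ∀ i, 0 ≤ q i)
    (hqp : ∀ i, q i ≤ α * p i) (hQ : 0 < ∑ i, q i) :
    ∀ S : Finset (Fin n), S.Nonempty →
      (1 - Real.exp (-(∑ j, q j) / α)) / (∑ j, q j) * ∑ i ∈ S, q i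
        ≤ 1 - ∏ i ∈ S, (1 - p i) :=
  stmt_7_general n α hα p q hp hq hqp hQ
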